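/- Let γ ∈ Π^s(p,q;M). Define γ̄ ∈ ℝ^{(m+1)×(n+1)} by: γ̄_{i,j} = γ_{i,j} for i ≤ m, j ≤ n; γ̄_{i,n+1} = p_i − Σ_{j=1}^n (M⊙γ)_{i,j} for i ≤ m; γ̄_{m+1,j} = q_j − Σ_{i=1}^m (M⊙γ)_{i,j} for j ≤ n; and γ̄_{m+1,n+1} = 0. Then γ̄ ∈ Π(p̄,q̄;M̄), and its cost satisfies ⟨M̄⊙γ̄, Ḡ⟩_F = Σ_{i,j} M_{i,j} γ_{i,j} G_{i,j} + ξ(‖p‖₁ + ‖q‖₁ − 2s). -/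

import Mathlib

open Finset

noncomputable section

variable {m n : ℕ}

/-- Mask matrix determined by the keypoint pair set `K`:
`M i j = 1` if `(i,j) ∈ K`; `M i j = 0` if `i ∈ I` or `j ∈ J` but `(i,j) ∉ K`;
`M i j = 1` otherwise. -/
def mask (K : Finset (Fin m × Fin n)) : Matrix (Fin m) (Fin n) ℝ :=
  fun i j =>
    if (i, j) ∈ K then 1
    else if (∃ j', (i, j') ∈ K) ∨ (∃ i', (i', j) ∈ K) then 0
    else 1

/-- The masked feasible set `Π(p, q; M)`. -/
def PiM (M : Matrix (Fin m) (Fin n) ℝ) (p : Fin m → ℝ) (q : Fin n → ℝ) :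
    Set (Matrix (Fin m) (Fin n) ℝ) :=
  {π | (∀ i j, 0 ≤ π i j) ∧ (∀ i, ∑ j, M i j * π i j = p i) ∧
    (∀ j, ∑ i, M i j * π i j = q j)}

/-- Extend an `m × n` matrix by one extra column, one extra row and a corner entry. -/
def extend (B : Matrix (Fin m) (Fin n) ℝ) (col : Fin m → ℝ) (row : Fin n → ℝ)
    (corner : ℝ) : Matrix (Fin (m + 1)) (Fin (n + 1)) ℝ :=
  fun i j =>
    if hi : (i : ℕ) < m then
      if hj : (j : ℕ) < n then B ⟨i, hi⟩ ⟨j, hj⟩ else col ⟨i, hi⟩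
    else if hj : (j : ℕ) < n then row ⟨j, hj⟩ else corner

/-- Extend a vector by one extra entry. -/
def extVec (v : Fin m → ℝ) (last : ℝ) : Fin (m + 1) → ℝ :=
  fun i => if hi : (i : ℕ) < m then v ⟨i, hi⟩ else last

/-- `a i = 0` if `i ∈ I` and `1` otherwise. -/
def avec (K : Finset (Fin m × Fin n)) : Fin m → ℝ :=
  fun i => if ∃ j, (i, j) ∈ K then 0 else 1

/-- `b j = 0` if `j ∈ J` and `1` otherwise. -/
def bvec (K : Finset (Fin m × Fin n)) : Fin n → ℝ :=
  fun j => if ∃ i, (i, j) ∈ K then 0 else 1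

/-- The extended mask `M̄`. -/
def Mbar (K : Finset (Fin m × Fin n)) : Matrix (Fin (m + 1)) (Fin (n + 1)) ℝ :=
  extend (mask K) (avec K) (bvec K) 1

/-- The extended guiding matrix `Ḡ`. -/
def Gbar (G : Matrix (Fin m) (Fin n) ℝ) (ξ A : ℝ) :
    Matrix (Fin (m + 1)) (Fin (n + 1)) ℝ :=
  extend G (fun _ => ξ) (fun _ => ξ) (2 * ξ + A)

/-- The extended source weights `p̄ = (pᵀ, ‖q‖₁ − s)ᵀ`. -/
def pbar (p : Fin m → ℝ) (q : Fin n → ℝ) (s : ℝ) : Fin (m + 1) → ℝ :=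
  extVec p (∑ j, q j - s)

/-- The extended target weights `q̄ = (qᵀ, ‖p‖₁ − s)ᵀ`. -/
def qbar (p : Fin m → ℝ) (q : Fin n → ℝ) (s : ℝ) : Fin (n + 1) → ℝ :=
  extVec q (∑ i, p i - s)

/-- The partial masked feasible set `Π^s(p, q; M)`. -/
def PiPartial (K : Finset (Fin m × Fin n)) (p : Fin m → ℝ) (q : Fin n → ℝ) (s : ℝ) :
    Set (Matrix (Fin m) (Fin n) ℝ) :=
  {π | (∀ i j, 0 ≤ π i j) ∧ (∀ i, ∑ j, mask K i j * π i j ≤ p i) ∧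
    (∀ j, ∑ i, mask K i j * π i j ≤ q j) ∧
    (∑ i, ∑ j, mask K i j * π i j = s) ∧
    (∀ i, (∃ j, (i, j) ∈ K) → ∑ j, mask K i j * π i j = p i) ∧
    (∀ j, (∃ i, (i, j) ∈ K) → ∑ i, mask K i j * π i j = q j)}

/-!
Padding the partial plan `γ` with its row and column slacks gives a balanced plan: each row or
column of `γ̄` sums to its masked mass plus its slack, i.e. to `p i` or `q j`, and the dummy row
and column carry the total slacks `‖q‖₁ − s` and `‖p‖₁ − s`. The zero pattern of `M̄` in the dummy
row and column is harmless because the slack of a keypoint row or column vanishes. Every slack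
entry is charged `ξ`, and the dummy corner carries no mass, which gives the cost.
-/

open Matrix

section Extend

variable (B : Matrix (Fin m) (Fin n) ℝ) (c : Fin m → ℝ) (r : Fin n → ℝ) (k : ℝ)

@[simp]
lemma extend_castSucc_castSucc (i : Fin m) (j : Fin n) :
    extend B c r k i.castSucc j.castSucc = B i j := by
  simp [extend]

@[simp]
lemma extend_castSucc_last (i : Fin m) : extend B c r k i.castSucc (Fin.last n) = c i := by
  simp [extend]

@[simp]
lemma extend_last_castSucc (j : Fin n) : extend B c r k (Fin.last m) j.castSucc = r j := by
  simp [extend]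

@[simp]
lemma extend_last_last : extend B c r k (Fin.last m) (Fin.last n) = k := by
  simp [extend]

@[simp]
lemma extVec_castSucc (v : Fin m → ℝ) (last : ℝ) (i : Fin m) :
    extVec v last i.castSucc = v i := by
  simp [extVec]

@[simp]
lemma extVec_last (v : Fin m → ℝ) (last : ℝ) : extVec v last (Fin.last m) = last := by
  simp [extVec]

lemma extend_hadamard (B' : Matrix (Fin m) (Fin n) ℝ) (c' : Fin m → ℝ) (r' : Fin n → ℝ)
    (k' : ℝ) :
    extend B c r k ⊙ extend B' c' r' k' = extend (B ⊙ B') (c * c') (r * r') (k * k') := by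
  ext i j
  induction i using Fin.lastCases <;> induction j using Fin.lastCases <;> simp

lemma extend_nonneg (hB : ∀ i j, 0 ≤ B i j) (hc : ∀ i, 0 ≤ c i) (hr : ∀ j, 0 ≤ r j)
    (hk : 0 ≤ k) (i : Fin (m + 1)) (j : Fin (n + 1)) : 0 ≤ extend B c r k i j := by
  induction i using Fin.lastCases <;> induction j using Fin.lastCases <;> simp [*]

lemma sum_extend_castSucc_row (i : Fin m) :
    ∑ j, extend B c r k i.castSucc j = ∑ j, B i j + c i := by
  simp [Fin.sum_univ_castSucc]

lemma sum_extend_last_row : ∑ j, extend B c r k (Fin.last m) j = ∑ j, r j + k := by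
  simp [Fin.sum_univ_castSucc]

lemma sum_extend_castSucc_col (j : Fin n) :
    ∑ i, extend B c r k i j.castSucc = ∑ i, B i j + r j := by
  simp [Fin.sum_univ_castSucc]

lemma sum_extend_last_col : ∑ i, extend B c r k i (Fin.last n) = ∑ i, c i + k := by
  simp [Fin.sum_univ_castSucc]

lemma sum_sum_extend :
    ∑ i, ∑ j, extend B c r k i j = ∑ i, ∑ j, B i j + ∑ i, c i + (∑ j, r j + k) := by
  rw [Fin.sum_univ_castSucc, sum_extend_last_row]
  simp only [sum_extend_castSucc_row, sum_add_distrib]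

end Extend

section Padding

variable {M π : Matrix (Fin m) (Fin n) ℝ} {a c : Fin m → ℝ} {b r : Fin n → ℝ}

lemma extend_mem_PiM {p : Fin m → ℝ} {q : Fin n → ℝ} (hπ : ∀ i j, 0 ≤ π i j)
    (hc : ∀ i, 0 ≤ c i) (hr : ∀ j, 0 ≤ r j) (hac : a * c = c) (hbr : b * r = r)
    (hrow : ∀ i, ∑ j, M i j * π i j + c i = p i) (hcol : ∀ j, ∑ i, M i j * π i j + r j = q j) :
    extend π c r 0 ∈ PiM (extend M a b 1) (extVec p (∑ j, r j)) (extVec q (∑ i, c i)) := by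
  have hMπ : extend M a b 1 ⊙ extend π c r 0 = extend (M ⊙ π) c r 0 := by
    rw [extend_hadamard, hac, hbr, mul_zero]
  refine ⟨extend_nonneg π c r 0 hπ hc hr le_rfl, fun i => ?_, fun j => ?_⟩
  · simp only [← hadamard_apply, hMπ]
    induction i using Fin.lastCases with
    | last => simp [sum_extend_last_row]
    | cast i => simp [sum_extend_castSucc_row, hrow]
  · simp only [← hadamard_apply, hMπ]
    induction j using Fin.lastCases with
    | last => simp [sum_extend_last_col]
    | cast j => simp [sum_extend_castSucc_col, hcol]

lemma sum_extend_mul_extend_mul_extend (G : Matrix (Fin m) (Fin n) ℝ) (ξ κ : ℝ)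
    (hac : a * c = c) (hbr : b * r = r) :
    ∑ i, ∑ j, extend M a b 1 i j * extend π c r 0 i j * extend G (fun _ => ξ) (fun _ => ξ) κ i j
      = ∑ i, ∑ j, M i j * π i j * G i j + ξ * (∑ i, c i + ∑ j, r j) := by
  simp only [← hadamard_apply, extend_hadamard, hac, hbr, sum_sum_extend]
  simp only [hadamard_apply, Pi.mul_apply, ← sum_mul]
  ring

end Padding

lemma avec_mul_eq_self {K : Finset (Fin m × Fin n)} {x : Fin m → ℝ}
    (hx : ∀ i, (∃ j, (i, j) ∈ K) → x i = 0) : avec K * x = x := by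
  funext i
  by_cases h : ∃ j, (i, j) ∈ K <;> simp [avec, h, hx]

lemma bvec_mul_eq_self {K : Finset (Fin m × Fin n)} {y : Fin n → ℝ}
    (hy : ∀ j, (∃ i, (i, j) ∈ K) → y j = 0) : bvec K * y = y := by
  funext j
  by_cases h : ∃ i, (i, j) ∈ K <;> simp [bvec, h, hy]

theorem extend_partial_plan_feasible_and_cost_general
    (p : Fin m → ℝ) (q : Fin n → ℝ) (K : Finset (Fin m × Fin n)) (s : ℝ)
    (G : Matrix (Fin m) (Fin n) ℝ) (ξ A : ℝ)
    (γ : Matrix (Fin m) (Fin n) ℝ) (hγ : γ ∈ PiPartial K p q s) :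
    extend γ (fun i => p i - ∑ j, mask K i j * γ i j)
        (fun j => q j - ∑ i, mask K i j * γ i j) 0
      ∈ PiM (Mbar K) (pbar p q s) (qbar p q s)
    ∧ ∑ i, ∑ j, Mbar K i j
          * extend γ (fun i => p i - ∑ j', mask K i j' * γ i j')
              (fun j => q j - ∑ i', mask K i' j * γ i' j) 0 i j
          * Gbar G ξ A i j
        = (∑ i : Fin m, ∑ j : Fin n, mask K i j * γ i j * G i j)
          + ξ * ((∑ i, p i) + (∑ j, q j) - 2 * s) := by
  obtain ⟨hγ0, hrow, hcol, htot, hI, hJ⟩ := hγ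
  have hac := avec_mul_eq_self (x := fun i => p i - ∑ j, mask K i j * γ i j)
    fun i hi => sub_eq_zero.2 (hI i hi).symm
  have hbr := bvec_mul_eq_self (y := fun j => q j - ∑ i, mask K i j * γ i j)
    fun j hj => sub_eq_zero.2 (hJ j hj).symm
  have hsum_row : ∑ i, (p i - ∑ j, mask K i j * γ i j) = ∑ i, p i - s := by
    rw [sum_sub_distrib, htot]
  have hsum_col : ∑ j, (q j - ∑ i, mask K i j * γ i j) = ∑ j, q j - s := by
    rw [sum_sub_distrib, sum_comm, htot]
  constructor
  · have h := extend_mem_PiM hγ0 (fun i => sub_nonneg.2 (hrow i))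
      (fun j => sub_nonneg.2 (hcol j)) hac hbr (fun i => add_sub_cancel _ _)
      (fun j => add_sub_cancel _ _)
    rwa [hsum_row, hsum_col] at h
  · rw [Mbar, Gbar, sum_extend_mul_extend_mul_extend G ξ _ hac hbr, hsum_row, hsum_col]
    ring

/-- a partial plan `γ ∈ Π^s(p,q;M)`, extended by sending the surplus
row/column mass to the dummy points and zero dummy-to-dummy mass, is feasible for
the extended problem, and its extended cost is the cost of `γ` plus
`ξ(‖p‖₁ + ‖q‖₁ − 2s)`. -/
theorem extend_partial_plan_feasible_and_cost
    (p : Fin m → ℝ) (q : Fin n → ℝ) (K : Finset (Fin m × Fin n)) (s : ℝ)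
    (G : Matrix (Fin m) (Fin n) ℝ) (ξ A : ℝ)
    (hp : ∀ i, 0 ≤ p i) (hq : ∀ j, 0 ≤ q j)
    (hK1 : ∀ a ∈ K, ∀ b ∈ K, a.1 = b.1 → a = b)
    (hK2 : ∀ a ∈ K, ∀ b ∈ K, a.2 = b.2 → a = b)
    (hs0 : 0 ≤ s) (hs : s ≤ min (∑ i, p i) (∑ j, q j))
    (γ : Matrix (Fin m) (Fin n) ℝ) (hγ : γ ∈ PiPartial K p q s) :
    extend γ (fun i => p i - ∑ j, mask K i j * γ i j)
        (fun j => q j - ∑ i, mask K i j * γ i j) 0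
      ∈ PiM (Mbar K) (pbar p q s) (qbar p q s)
    ∧ ∑ i, ∑ j, Mbar K i j
          * extend γ (fun i => p i - ∑ j', mask K i j' * γ i j')
              (fun j => q j - ∑ i', mask K i' j * γ i' j) 0 i j
          * Gbar G ξ A i j
        = (∑ i : Fin m, ∑ j : Fin n, mask K i j * γ i j * G i j)
          + ξ * ((∑ i, p i) + (∑ j, q j) - 2 * s) :=
  extend_partial_plan_feasible_and_cost_general p q K s G ξ A γ hγ
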